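/- Define T = flip ∘ Θ ∈ End(V ⊗ V), where flip(u ⊗ w) = (-1)^{p̄(u)p̄(w)} w ⊗ u. Then T - T^{-1} = (q - q^{-1}) · id_{V⊗V}. -/

import Mathlib

set_option synthInstance.maxHeartbeats 400000

/-- The index set `I = {1,…,n,-1,…,-n}`: `Sum.inl a ↔ a+1`, `Sum.inr a ↔ -(a+1)`. -/
abbrev Idx (n : ℕ) := Fin n ⊕ Fin n

/-- Parity: `0` on positive indices, `1` on negative ones. -/
def pa {n : ℕ} : Idx n → ℕ
  | .inl _ => 0
  | .inr _ => 1

/-- The integer represented by an index. -/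
def idxZ {n : ℕ} : Idx n → ℤ
  | .inl a => (a : ℤ) + 1
  | .inr a => -((a : ℤ) + 1)

/-- Negation of an index. -/
def ng {n : ℕ} : Idx n → Idx n
  | .inl a => .inr a
  | .inr a => .inl a

/-- Absolute value of an index. -/
def absIdx {n : ℕ} : Idx n → Fin n
  | .inl a => a
  | .inr a => a

/-- `φ(i,j) = δ_{|i|,|j|} sgn(j)`. -/
def phiIdx {n : ℕ} (i j : Idx n) : ℤ :=
  if absIdx i = absIdx j then (if pa j = 1 then -1 else 1) else 0

/-- The coefficient of `E_{ab} ⊗ E_{cd}` in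
`Θ(x) = Σ_{i,j} x^{φ(i,j)} E_{ii}⊗E_{jj} + (x - x⁻¹) Σ_{i<j} (-1)^{p(i)}(E_{ji}+E_{-j,-i})⊗E_{ij}`. -/
noncomputable def thetaCoeff {n : ℕ} (x : RatFunc ℚ) (a b c d : Idx n) : RatFunc ℚ :=
  (if a = b ∧ c = d then x ^ phiIdx a c else 0)
  + (if idxZ c < idxZ d ∧ a = d ∧ b = c then (x - x⁻¹) * (-1) ^ pa c else 0)
  + (if idxZ c < idxZ d ∧ a = ng d ∧ b = ng c then (x - x⁻¹) * (-1) ^ pa c else 0)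

/-- The matrix of `Θ(x) ∈ End(V) ⊗ End(V)` acting on `V ⊗ V`, where the superalgebra
`End(V) ⊗ End(V)` is represented faithfully on `V ⊗ V` via the Koszul sign rule:
`(E_{ab} ⊗ E_{cd})(v_b ⊗ v_d) = (-1)^{(p(c)+p(d))·p(b)} v_a ⊗ v_c`.  Under this
representation the super tensor-product multiplication
`(a'⊗b)(a⊗b') = (-1)^{p̄(a)p̄(b)} a'a ⊗ bb'` becomes matrix multiplication. -/
noncomputable def thetaMat (n : ℕ) (x : RatFunc ℚ) :
    Matrix (Idx n × Idx n) (Idx n × Idx n) (RatFunc ℚ) :=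
  Matrix.of fun rc cc =>
    (-1 : RatFunc ℚ) ^ ((pa rc.2 + pa cc.2) * pa cc.1) *
      thetaCoeff x rc.1 cc.1 rc.2 cc.2


/-- The matrix of the super flip `flip(v_i ⊗ v_j) = (-1)^{p(i)p(j)} v_j ⊗ v_i`. -/
noncomputable def flipMat (n : ℕ) :
    Matrix (Idx n × Idx n) (Idx n × Idx n) (RatFunc ℚ) :=
  Matrix.of fun rc cc =>
    if rc.1 = cc.2 ∧ rc.2 = cc.1 then (-1 : RatFunc ℚ) ^ (pa cc.1 * pa cc.2) else 0

/-- `T = flip ∘ Θ`. -/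
noncomputable def tMat (n : ℕ) : Matrix (Idx n × Idx n) (Idx n × Idx n) (RatFunc ℚ) :=
  flipMat n * thetaMat n RatFunc.X

/-- `T⁻¹ = Θ(q⁻¹) ∘ flip`. -/
noncomputable def tInvMat (n : ℕ) : Matrix (Idx n × Idx n) (Idx n × Idx n) (RatFunc ℚ) :=
  thetaMat n (RatFunc.X)⁻¹ * flipMat n

/-!
Split `Θ(x) = D(x) + (x - x⁻¹) N` into its diagonal part `D(x) = Σ x^{φ(i,j)} E_{ii} ⊗ E_{jj}`
and the part `N` supported on `v_i ⊗ v_j ↦ ±v_j ⊗ v_i, ±v_{-j} ⊗ v_{-i}`. Then `D(x) D(x⁻¹) = 1`,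
`D(x) N = N D(x⁻¹)` (`φ` changes sign along the support of `N`) and `N² = 0` (the two paths through
`v_j ⊗ v_i` and `v_{-j} ⊗ v_{-i}` cancel), so `Θ(x⁻¹) = Θ(x)⁻¹` and `T` is invertible because
`flip² = 1`. For the Hecke relation, `flip D(x) - D(x⁻¹) flip = (x - x⁻¹) E`, where `E` projects
onto the span of the `v_i ⊗ v_i`, and `flip N + N flip = 1 - E`.
-/

section

variable {n : ℕ}

lemma ng_ng (i : Idx n) : ng (ng i) = i := by cases i <;> rfl

lemma ng_ne (i : Idx n) : ng i ≠ i := by cases i <;> simp [ng]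

lemma phiIdx_swap_of_ne {i j : Idx n} (h : i ≠ j) : phiIdx j i = -phiIdx i j := by
  cases i <;> cases j <;> simp_all [phiIdx, absIdx, pa, eq_comm, apply_ite Neg.neg]

lemma phiIdx_ng_swap_of_ne {i j : Idx n} (h : j ≠ ng i) : phiIdx (ng j) (ng i) = -phiIdx i j := by
  cases i <;> cases j <;> simp_all [phiIdx, absIdx, pa, ng, eq_comm, apply_ite Neg.neg]

lemma flipMat_apply (r c : Idx n × Idx n) :
    flipMat n r c = if c = r.swap then (-1 : RatFunc ℚ) ^ (pa r.1 * pa r.2) else 0 := by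
  obtain ⟨a, b⟩ := r
  obtain ⟨e, f⟩ := c
  simp only [flipMat, Matrix.of_apply, Prod.swap_prod_mk, Prod.mk.injEq]
  split_ifs with h₁ h₂ h₂
  · rw [h₁.1, h₁.2, mul_comm]
  · exact absurd ⟨h₁.2.symm, h₁.1.symm⟩ h₂
  · exact absurd ⟨h₂.2.symm, h₂.1.symm⟩ h₁
  · rfl

lemma flipMat_mul_apply (M : Matrix (Idx n × Idx n) (Idx n × Idx n) (RatFunc ℚ))
    (r c : Idx n × Idx n) :
    (flipMat n * M) r c = (-1 : RatFunc ℚ) ^ (pa r.1 * pa r.2) * M r.swap c := by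
  simp [Matrix.mul_apply, flipMat_apply, ite_mul]

lemma mul_flipMat_apply (M : Matrix (Idx n × Idx n) (Idx n × Idx n) (RatFunc ℚ))
    (r c : Idx n × Idx n) :
    (M * flipMat n) r c = M r c.swap * (-1 : RatFunc ℚ) ^ (pa c.1 * pa c.2) := by
  simp [Matrix.mul_apply, flipMat_apply, mul_ite, ← Prod.swap_eq_iff_eq_swap, mul_comm (pa c.2)]

lemma flipMat_mul_self : flipMat n * flipMat n = 1 := by
  ext r c
  rw [flipMat_mul_apply, flipMat_apply, Prod.swap_swap, Prod.fst_swap, Prod.snd_swap, mul_ite,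
    mul_zero, ← pow_add, mul_comm (pa r.2), (Even.add_self _).neg_one_pow, Matrix.one_apply]
  exact if_congr eq_comm rfl rfl

noncomputable def thetaDiag (n : ℕ) (x : RatFunc ℚ) :
    Matrix (Idx n × Idx n) (Idx n × Idx n) (RatFunc ℚ) :=
  Matrix.diagonal fun p => x ^ phiIdx p.1 p.2

noncomputable def thetaNil (n : ℕ) : Matrix (Idx n × Idx n) (Idx n × Idx n) (RatFunc ℚ) :=
  Matrix.of fun r c => (-1 : RatFunc ℚ) ^ ((pa r.2 + pa c.2) * pa c.1) *
    ((if idxZ r.2 < idxZ c.2 ∧ r.1 = c.2 ∧ c.1 = r.2 then (-1) ^ pa r.2 else 0) +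
      (if idxZ r.2 < idxZ c.2 ∧ r.1 = ng c.2 ∧ c.1 = ng r.2 then (-1) ^ pa r.2 else 0))

lemma thetaMat_eq (x : RatFunc ℚ) : thetaMat n x = thetaDiag n x + (x - x⁻¹) • thetaNil n := by
  ext ⟨a, b⟩ ⟨e, f⟩
  simp only [thetaMat, thetaCoeff, thetaDiag, thetaNil, Matrix.of_apply, Matrix.add_apply,
    Matrix.smul_apply, Matrix.diagonal_apply, smul_eq_mul, Prod.mk.injEq]
  by_cases h : a = e ∧ b = f
  · obtain ⟨rfl, rfl⟩ := h
    simp only [and_self, lt_irrefl, false_and, if_true, if_false,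
      ((Even.add_self _).mul_right _).neg_one_pow]
    ring
  · simp only [if_neg h]
    split_ifs <;> ring

lemma thetaDiag_mul_inv {x : RatFunc ℚ} (hx : x ≠ 0) : thetaDiag n x * thetaDiag n x⁻¹ = 1 := by
  simp only [thetaDiag, Matrix.diagonal_mul_diagonal, _root_.inv_zpow', ← zpow_add₀ hx,
    add_neg_cancel, zpow_zero, Matrix.diagonal_one]

lemma thetaNil_ne_zero {a b e f : Idx n} (h : thetaNil n (a, b) (e, f) ≠ 0) :
    (idxZ b < idxZ a ∧ e = b ∧ f = a) ∨ (idxZ b < idxZ (ng a) ∧ e = ng b ∧ f = ng a) := by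
  contrapose! h
  simp only [thetaNil, Matrix.of_apply]
  rw [if_neg, if_neg, add_zero, mul_zero]
  · rintro ⟨hlt, rfl, rfl⟩
    rw [ng_ng] at h
    exact h.2 hlt rfl rfl
  · rintro ⟨hlt, rfl, rfl⟩
    exact h.1 hlt rfl rfl

lemma phiIdx_eq_neg_of_thetaNil_ne_zero {a b e f : Idx n} (h : thetaNil n (a, b) (e, f) ≠ 0) :
    phiIdx a b = -phiIdx e f := by
  rcases thetaNil_ne_zero h with ⟨hlt, rfl, rfl⟩ | ⟨hlt, rfl, rfl⟩
  · rw [phiIdx_swap_of_ne (ne_of_apply_ne idxZ hlt.ne'), neg_neg]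
  · rw [phiIdx_ng_swap_of_ne (ne_of_apply_ne idxZ hlt.ne), neg_neg]

lemma thetaDiag_mul_thetaNil (x : RatFunc ℚ) :
    thetaDiag n x * thetaNil n = thetaNil n * thetaDiag n x⁻¹ := by
  ext ⟨a, b⟩ ⟨e, f⟩
  simp only [thetaDiag, Matrix.diagonal_mul, Matrix.mul_diagonal]
  by_cases h : thetaNil n (a, b) (e, f) = 0
  · simp [h]
  · rw [phiIdx_eq_neg_of_thetaNil_ne_zero h, _root_.inv_zpow', mul_comm]

lemma thetaNil_mul_thetaNil_entry_cancel (a b e f : Idx n) :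
    thetaNil n (a, b) (b, a) * thetaNil n (b, a) (e, f) +
      thetaNil n (a, b) (ng b, ng a) * thetaNil n (ng b, ng a) (e, f) = 0 := by
  cases a <;> cases b <;> cases e <;> cases f <;>
    simp only [thetaNil, Matrix.of_apply, ng, pa, idxZ, Sum.inl.injEq, Sum.inr.injEq,
      reduceCtorEq, false_and, and_false, and_true, if_false, Fin.ext_iff] <;>
    split_ifs <;> first | omega | ring

lemma thetaNil_mul_self : thetaNil n * thetaNil n = 0 := by
  ext ⟨a, b⟩ ⟨e, f⟩
  have hsupp : ∀ k ∉ ({(b, a), (ng b, ng a)} : Finset (Idx n × Idx n)),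
      thetaNil n (a, b) k * thetaNil n k (e, f) = 0 := by
    rintro ⟨k₁, k₂⟩ hk
    refine mul_eq_zero_of_left (not_not.mp fun h => hk ?_) _
    rcases thetaNil_ne_zero h with ⟨-, rfl, rfl⟩ | ⟨-, rfl, rfl⟩ <;> simp
  have hne : ((b, a) : Idx n × Idx n) ≠ (ng b, ng a) := fun h => ng_ne b (congrArg Prod.fst h).symm
  rw [Matrix.mul_apply, Matrix.zero_apply,
    ← Finset.sum_subset (Finset.subset_univ _) fun k _ => hsupp k, Finset.sum_pair hne]
  exact thetaNil_mul_thetaNil_entry_cancel a b e f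

lemma thetaMat_mul_inv {x : RatFunc ℚ} (hx : x ≠ 0) : thetaMat n x * thetaMat n x⁻¹ = 1 := by
  rw [thetaMat_eq, thetaMat_eq, inv_inv, add_mul, mul_add, mul_add, Matrix.mul_smul,
    Matrix.smul_mul, Matrix.smul_mul, Matrix.mul_smul, thetaDiag_mul_inv hx,
    ← thetaDiag_mul_thetaNil, thetaNil_mul_self, smul_zero, smul_zero, add_zero, add_assoc,
    ← add_smul, sub_add_sub_cancel, sub_self, zero_smul, add_zero]

noncomputable def sameIdxProj (n : ℕ) : Matrix (Idx n × Idx n) (Idx n × Idx n) (RatFunc ℚ) :=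
  Matrix.diagonal fun p => if p.1 = p.2 then 1 else 0

lemma flipMat_mul_thetaDiag_sub (x : RatFunc ℚ) :
    flipMat n * thetaDiag n x - thetaDiag n x⁻¹ * flipMat n = (x - x⁻¹) • sameIdxProj n := by
  ext ⟨a, b⟩ c
  simp only [Matrix.sub_apply, flipMat_mul_apply, mul_flipMat_apply, Matrix.smul_apply, thetaDiag,
    sameIdxProj, Matrix.diagonal_apply]
  rcases eq_or_ne c (b, a) with rfl | hc
  · rcases eq_or_ne a b with rfl | hab
    · cases a <;> simp [phiIdx, pa, neg_add_eq_sub]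
    · simp [phiIdx_swap_of_ne hab, hab, mul_comm (pa b)]
      ring
  · have hswap : (a, b) ≠ c.swap := fun h => hc (by rw [← Prod.swap_swap c, ← h, Prod.swap_prod_mk])
    have hdiag : ¬((a, b) = c ∧ a = b) := fun ⟨h, hab⟩ => hc (by simp [← h, hab])
    simp_all [eq_comm]

lemma flipMat_mul_thetaNil_add :
    flipMat n * thetaNil n + thetaNil n * flipMat n = 1 - sameIdxProj n := by
  ext ⟨a, b⟩ ⟨e, f⟩
  rw [Matrix.add_apply, flipMat_mul_apply, mul_flipMat_apply, Matrix.sub_apply, Matrix.one_apply,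
    sameIdxProj, Matrix.diagonal_apply]
  cases a <;> cases b <;> cases e <;> cases f <;>
    simp only [thetaNil, Matrix.of_apply, Prod.swap_prod_mk, ng, pa, idxZ, Sum.inl.injEq,
      Sum.inr.injEq, reduceCtorEq, false_and, and_false, if_false, Fin.ext_iff, Prod.mk.injEq] <;>
    (try split_ifs) <;> first | omega | ring

lemma flipMat_mul_thetaMat_sub (x : RatFunc ℚ) :
    flipMat n * thetaMat n x - thetaMat n x⁻¹ * flipMat n = (x - x⁻¹) • 1 := by
  calc flipMat n * thetaMat n x - thetaMat n x⁻¹ * flipMat n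
      = (flipMat n * thetaDiag n x - thetaDiag n x⁻¹ * flipMat n) +
          (x - x⁻¹) • (flipMat n * thetaNil n + thetaNil n * flipMat n) := by
        rw [thetaMat_eq, thetaMat_eq, inv_inv]
        simp only [mul_add, add_mul, Matrix.mul_smul, Matrix.smul_mul]
        rw [show x⁻¹ - x = -(x - x⁻¹) by ring, neg_smul, smul_add]
        abel
    _ = (x - x⁻¹) • 1 := by
        rw [flipMat_mul_thetaDiag_sub, flipMat_mul_thetaNil_add, ← smul_add, add_sub_cancel]

end

/-- `T := flip ∘ Θ` is invertible with inverse `Θ(q⁻¹) ∘ flip`, and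
`T - T⁻¹ = (q - q⁻¹) · id_{V ⊗ V}`. -/
theorem stmt9 (n : ℕ) :
    tMat n * tInvMat n = 1 ∧ tInvMat n * tMat n = 1 ∧
    tMat n - tInvMat n =
      ((RatFunc.X : RatFunc ℚ) - (RatFunc.X : RatFunc ℚ)⁻¹) • (1 : Matrix (Idx n × Idx n) (Idx n × Idx n) (RatFunc ℚ)) := by
  have hX : (RatFunc.X : RatFunc ℚ) ≠ 0 := RatFunc.X_ne_zero
  refine ⟨?_, ?_, flipMat_mul_thetaMat_sub _⟩
  · rw [tMat, tInvMat, mul_assoc, ← mul_assoc (thetaMat n _), thetaMat_mul_inv hX, one_mul,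
      flipMat_mul_self]
  · rw [tInvMat, tMat, mul_assoc, ← mul_assoc (flipMat n), flipMat_mul_self, one_mul]
    simpa using thetaMat_mul_inv (n := n) (inv_ne_zero hX)
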